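/- The 4-belts of G_Q are exactly the four vertex sets {a,c,f,g}, {a,d,f,j}, {c,d,h,j}, and {f,g,h,j}; in particular G_Q has exactly four 4-belts. -/

import Mathlib

/-! A 4-belt is the vertex set of an induced 4-cycle, so the 4-belts of `G_Q` are found by running
through all `11 ^ 4` quadruples of vertices, which `decide` does; conversely each of the four
listed sets is traversed by an induced 4-cycle in a suitable order. -/

/-- Edge list of the facet-intersection graph `G_Q` of the polytope `𝒬`
(vertices: a=0, b=1, c=2, d=3, e=4, f=5, g=6, h=7, i=8, j=9, k=10). -/
def qEdgeList : List (Fin 11 × Fin 11) :=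
  [(0,1),(0,2),(0,3),(0,4),(0,5),(1,2),(1,5),(1,6),(2,3),(2,6),(2,7),(2,8),
   (3,4),(3,8),(3,9),(4,5),(4,9),(5,6),(5,9),(5,10),(6,7),(6,10),(7,8),(7,9),
   (7,10),(8,9),(9,10)]

/-- The facet-intersection graph `G_Q` of the polytope `𝒬`. -/
def G_Q : SimpleGraph (Fin 11) where
  Adj u v := (u, v) ∈ qEdgeList ∨ (v, u) ∈ qEdgeList
  symm := ⟨fun u v h => h.symm⟩
  loopless := ⟨by intro v; fin_cases v <;> decide⟩

instance : DecidableRel G_Q.Adj :=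
  fun u v => inferInstanceAs (Decidable ((u, v) ∈ qEdgeList ∨ (v, u) ∈ qEdgeList))

/-- A 4-belt of a simple graph `G` is a 4-element vertex set that can be written as
`{w, x, y, z}` where `wx`, `xy`, `yz`, `zw` are edges of `G` while `wy`, `xz` are not. -/
def IsFourBelt {V : Type*} (G : SimpleGraph V) (B : Set V) : Prop :=
  ∃ w x y z : V, B = {w, x, y, z} ∧ B.ncard = 4 ∧
    G.Adj w x ∧ G.Adj x y ∧ G.Adj y z ∧ G.Adj z w ∧ ¬ G.Adj w y ∧ ¬ G.Adj x z

/-- The pair `{u, v}` is a diagonal of the 4-belt `B` of `G`. -/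
def IsDiagonalOfBelt {V : Type*} (G : SimpleGraph V) (u v : V) (B : Set V) : Prop :=
  ∃ w x y z : V, B = {w, x, y, z} ∧ B.ncard = 4 ∧
    G.Adj w x ∧ G.Adj x y ∧ G.Adj y z ∧ G.Adj z w ∧ ¬ G.Adj w y ∧ ¬ G.Adj x z ∧
    (({u, v} : Set V) = {w, y} ∨ ({u, v} : Set V) = {x, z})

/-- The pair `{u, v}` is a diagonal of some 4-belt of `G`. -/
def IsBeltDiagonal {V : Type*} (G : SimpleGraph V) (u v : V) : Prop :=
  ∃ B : Set V, IsDiagonalOfBelt G u v B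

section FourBelts

variable {V : Type*} [DecidableEq V] (G : SimpleGraph V)

def IsBeltQuadruple (w x y z : V) : Prop :=
  ({w, x, y, z} : Finset V).card = 4 ∧
    G.Adj w x ∧ G.Adj x y ∧ G.Adj y z ∧ G.Adj z w ∧ ¬ G.Adj w y ∧ ¬ G.Adj x z

instance [DecidableRel G.Adj] (w x y z : V) : Decidable (IsBeltQuadruple G w x y z) :=
  inferInstanceAs (Decidable (_ ∧ _))

theorem isFourBelt_iff {B : Set V} :
    IsFourBelt G B ↔ ∃ w x y z, B = ↑({w, x, y, z} : Finset V) ∧ IsBeltQuadruple G w x y z := by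
  simp only [IsFourBelt, IsBeltQuadruple, ← Set.ncard_coe_finset, Finset.coe_insert,
    Finset.coe_singleton]
  exact exists₄_congr fun w x y z => and_congr_right fun hB => by rw [hB]

theorem setOf_isFourBelt_eq_image (S : Finset (Finset V))
    (hsub : ∀ w x y z, IsBeltQuadruple G w x y z → {w, x, y, z} ∈ S)
    (hsup : ∀ s ∈ S, ∃ w x y z, {w, x, y, z} = s ∧ IsBeltQuadruple G w x y z) :
    {B | IsFourBelt G B} = (↑) '' (S : Set (Finset V)) := by
  ext B
  simp only [Set.mem_ofPred_eq, isFourBelt_iff, Set.mem_image, Finset.mem_coe]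
  constructor
  · rintro ⟨w, x, y, z, rfl, h⟩
    exact ⟨_, hsub w x y z h, rfl⟩
  · rintro ⟨s, hs, rfl⟩
    obtain ⟨w, x, y, z, rfl, h⟩ := hsup s hs
    exact ⟨w, x, y, z, rfl, h⟩

end FourBelts

def fourBelts_G_Q : Finset (Finset (Fin 11)) :=
  {{0, 2, 5, 6}, {0, 3, 5, 9}, {2, 3, 7, 9}, {5, 6, 7, 9}}

theorem mem_fourBelts_G_Q_of_isBeltQuadruple :
    ∀ w x y z : Fin 11, IsBeltQuadruple G_Q w x y z → {w, x, y, z} ∈ fourBelts_G_Q := by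
  decide

theorem exists_isBeltQuadruple_of_mem_fourBelts_G_Q :
    ∀ s ∈ fourBelts_G_Q, ∃ w x y z, {w, x, y, z} = s ∧ IsBeltQuadruple G_Q w x y z := by
  simp only [fourBelts_G_Q, Finset.mem_insert, Finset.mem_singleton, forall_eq_or_imp, forall_eq]
  exact ⟨⟨0, 2, 6, 5, by decide⟩, ⟨0, 3, 9, 5, by decide⟩, ⟨2, 3, 9, 7, by decide⟩,
    ⟨5, 6, 7, 9, by decide⟩⟩

/-- The 4-belts of `G_Q` are exactly the four vertex sets {a,c,f,g}, {a,d,f,j},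
{c,d,h,j} and {f,g,h,j}; in particular `G_Q` has exactly four 4-belts. -/
theorem stmt_5 :
    {B : Set (Fin 11) | IsFourBelt G_Q B} =
      {({0, 2, 5, 6} : Set (Fin 11)), {0, 3, 5, 9}, {2, 3, 7, 9}, {5, 6, 7, 9}} ∧
    {B : Set (Fin 11) | IsFourBelt G_Q B}.ncard = 4 := by
  have h := setOf_isFourBelt_eq_image G_Q fourBelts_G_Q mem_fourBelts_G_Q_of_isBeltQuadruple
    exists_isBeltQuadruple_of_mem_fourBelts_G_Q
  refine ⟨by simp [h, fourBelts_G_Q, Set.image_insert_eq], ?_⟩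
  rw [h, Set.ncard_image_of_injective _ Finset.coe_injective, Set.ncard_coe_finset]
  decide
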